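/- Finite-depth proportional bound (induction invariant from the proof of Proposition 1). Let m be a discrete semimeasure, M z := ∑' u : List Bool, m (z ++ u), and let a : List Bool → ℝ≥0∞ satisfy, for every string z and bit b, a (z ++ [b]) = a z * (M (z ++ [b]) / (M (z ++ [false]) + M (z ++ [true]))) (quotients in ℝ≥0∞, 0/0 = 0). Then for every string z with a z ≠ 0 and a z ≠ ∞ and every infinite binary sequence ω : ℕ → Bool, the sum along the path starting at z satisfies ∑' n : ℕ, m (z ++ ω↾n) / a (z ++ ω↾n) ≤ M z / a z. -/

import Mathlib

open scoped ENNReal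

/-- The first `n` bits of an infinite binary sequence `ω`. -/
def prefixSeq (ω : ℕ → Bool) (n : ℕ) : List Bool := (List.range n).map ω

/-- A discrete semimeasure on binary strings. -/
def DiscreteSemimeasure (m : List Bool → ℝ≥0∞) : Prop := ∑' x : List Bool, m x ≤ 1

/-!
With `s z = M (z ++ [false]) + M (z ++ [true])` we have `M z = m z + s z`, and the recursion
for `a` says exactly that `M / a` at a child `z ++ [b]` with `M (z ++ [b]) ≠ 0` equals
`s z / a z`. So, peeling off the first term `m z / a z` of the path sum and bounding the
rest by induction from `z ++ [b]`, the first `N + 1` terms are at most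
`m z / a z + s z / a z = M z / a z`. A child with `M (z ++ [b]) = 0` carries no mass, and
`M z = ∞` makes the bound trivial.
-/

theorem ENNReal.div_mul_div_eq_div {a x s : ℝ≥0∞} (ha₀ : a ≠ 0) (ha : a ≠ ∞) (hx₀ : x ≠ 0)
    (hx : x ≠ ∞) (hs₀ : s ≠ 0) (hs : s ≠ ∞) : x / (a * (x / s)) = s / a := by
  rw [ENNReal.div_eq_div_iff ha₀ ha (mul_ne_zero ha₀ (ENNReal.div_pos hx₀ hs).ne')
    (ENNReal.mul_ne_top ha (ENNReal.div_lt_top hx hs₀).ne), mul_assoc,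
    ENNReal.div_mul_cancel hs₀ hs]

theorem List.tsum_eq_nil_add_tsum_cons {α : Type*} (f : List α → ℝ≥0∞) :
    ∑' u, f u = f [] + ∑' p : α × List α, f (p.1 :: p.2) := by
  classical
  have hcons : Function.Injective fun p : α × List α => p.1 :: p.2 :=
    fun p q h => Prod.ext (List.head_eq_of_cons_eq h) (List.tail_eq_of_cons_eq h)
  rw [ENNReal.tsum_eq_add_tsum_ite [], ← hcons.tsum_eq]
  · simp only [List.cons_ne_nil, if_false]
  · rintro (_ | ⟨b, t⟩) hu
    · simp at hu
    · exact ⟨(b, t), rfl⟩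

theorem prefixSeq_zero (ω : ℕ → Bool) : prefixSeq ω 0 = [] := rfl

theorem prefixSeq_succ (ω : ℕ → Bool) (n : ℕ) :
    prefixSeq ω (n + 1) = ω 0 :: prefixSeq (fun k => ω (k + 1)) n := by
  simp [prefixSeq, List.range_succ_eq_map, Function.comp_def]

noncomputable def cylinderMass (m : List Bool → ℝ≥0∞) (z : List Bool) : ℝ≥0∞ := ∑' u, m (z ++ u)

theorem cylinderMass_eq_add (m : List Bool → ℝ≥0∞) (z : List Bool) :
    cylinderMass m z
      = m z + (cylinderMass m (z ++ [false]) + cylinderMass m (z ++ [true])) := by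
  simp only [cylinderMass, List.tsum_eq_nil_add_tsum_cons fun u => m (z ++ u),
    List.append_nil, ENNReal.tsum_prod', tsum_fintype, Fintype.sum_bool, List.append_assoc,
    List.cons_append, List.nil_append, add_comm (∑' t, m (z ++ true :: t))]

theorem le_cylinderMass (m : List Bool → ℝ≥0∞) (z u : List Bool) :
    m (z ++ u) ≤ cylinderMass m z :=
  ENNReal.le_tsum (f := fun u => m (z ++ u)) u

theorem cylinderMass_append_singleton_le (m : List Bool → ℝ≥0∞) (z : List Bool) (b : Bool) :
    cylinderMass m (z ++ [b])
      ≤ cylinderMass m (z ++ [false]) + cylinderMass m (z ++ [true]) := by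
  cases b
  exacts [le_self_add, le_add_self]

section recursion

variable {m a : List Bool → ℝ≥0∞}

theorem cylinderMass_div_append_singleton
    (ha : ∀ (z : List Bool) (b : Bool), a (z ++ [b]) = a z * (cylinderMass m (z ++ [b]) /
      (cylinderMass m (z ++ [false]) + cylinderMass m (z ++ [true]))))
    {z : List Bool} {b : Bool} (ha₀ : a z ≠ 0) (ha_top : a z ≠ ∞)
    (hM : cylinderMass m z ≠ ∞) (hMb : cylinderMass m (z ++ [b]) ≠ 0) :
    a (z ++ [b]) ≠ 0 ∧ a (z ++ [b]) ≠ ∞ ∧ cylinderMass m (z ++ [b]) / a (z ++ [b])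
      = (cylinderMass m (z ++ [false]) + cylinderMass m (z ++ [true])) / a z := by
  set s := cylinderMass m (z ++ [false]) + cylinderMass m (z ++ [true])
  have hMb_le : cylinderMass m (z ++ [b]) ≤ s := cylinderMass_append_singleton_le m z b
  have hs : s ≠ ∞ := ne_top_of_le_ne_top hM (cylinderMass_eq_add m z ▸ le_add_self)
  have hs₀ : s ≠ 0 := fun h => hMb (le_antisymm (h ▸ hMb_le) bot_le)
  have hMb_top : cylinderMass m (z ++ [b]) ≠ ∞ := ne_top_of_le_ne_top hs hMb_le
  rw [ha z b]
  exact ⟨mul_ne_zero ha₀ (ENNReal.div_pos hMb hs).ne',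
    ENNReal.mul_ne_top ha_top (ENNReal.div_lt_top hMb_top hs₀).ne,
    ENNReal.div_mul_div_eq_div ha₀ ha_top hMb hMb_top hs₀ hs⟩

theorem sum_range_div_le_cylinderMass_div
    (ha : ∀ (z : List Bool) (b : Bool), a (z ++ [b]) = a z * (cylinderMass m (z ++ [b]) /
      (cylinderMass m (z ++ [false]) + cylinderMass m (z ++ [true]))))
    (N : ℕ) (z : List Bool) (ha₀ : a z ≠ 0) (ha_top : a z ≠ ∞) (ω : ℕ → Bool) :
    ∑ n ∈ Finset.range N, m (z ++ prefixSeq ω n) / a (z ++ prefixSeq ω n)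
      ≤ cylinderMass m z / a z := by
  induction N generalizing z ω with
  | zero => simp
  | succ N ih =>
    by_cases hM : cylinderMass m z = ∞
    · simp [hM, ENNReal.top_div_of_ne_top ha_top]
    set s := cylinderMass m (z ++ [false]) + cylinderMass m (z ++ [true])
    set b := ω 0
    have hpath (n : ℕ) : z ++ prefixSeq ω (n + 1) = z ++ [b] ++ prefixSeq (ω <| · + 1) n := by
      rw [prefixSeq_succ, List.append_cons]
    have htail : ∑ n ∈ Finset.range N, m (z ++ [b] ++ prefixSeq (ω <| · + 1) n) /
        a (z ++ [b] ++ prefixSeq (ω <| · + 1) n) ≤ s / a z := by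
      by_cases hMb : cylinderMass m (z ++ [b]) = 0
      · have hzero (u : List Bool) : m (z ++ [b] ++ u) = 0 :=
          le_antisymm (hMb ▸ le_cylinderMass m _ u) bot_le
        simp only [hzero, ENNReal.zero_div, Finset.sum_const_zero, zero_le]
      obtain ⟨hab₀, hab_top, hratio⟩ := cylinderMass_div_append_singleton ha ha₀ ha_top hM hMb
      exact (ih _ hab₀ hab_top _).trans hratio.le
    calc ∑ n ∈ Finset.range (N + 1), m (z ++ prefixSeq ω n) / a (z ++ prefixSeq ω n)
        = (∑ n ∈ Finset.range N, m (z ++ [b] ++ prefixSeq (ω <| · + 1) n) /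
            a (z ++ [b] ++ prefixSeq (ω <| · + 1) n)) + m z / a z := by
          simp only [Finset.sum_range_succ', hpath, prefixSeq_zero, List.append_nil]
      _ ≤ s / a z + m z / a z := add_le_add_left htail _
      _ = cylinderMass m z / a z := by
          rw [ENNReal.div_add_div_same, add_comm, ← cylinderMass_eq_add]

end recursion

theorem proportional_invariant_general (m : List Bool → ℝ≥0∞)
    (M : List Bool → ℝ≥0∞) (hM : ∀ z : List Bool, M z = ∑' u : List Bool, m (z ++ u))
    (a : List Bool → ℝ≥0∞)
    (ha : ∀ (z : List Bool) (b : Bool),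
      a (z ++ [b]) = a z * (M (z ++ [b]) / (M (z ++ [false]) + M (z ++ [true])))) :
    ∀ z : List Bool, a z ≠ 0 → a z ≠ ∞ →
      ∀ ω : ℕ → Bool,
        ∑' n : ℕ, m (z ++ prefixSeq ω n) / a (z ++ prefixSeq ω n) ≤ M z / a z := by
  obtain rfl : M = cylinderMass m := funext hM
  intro z ha₀ ha_top ω
  exact ENNReal.tsum_le_of_sum_range_le fun N =>
    sum_range_div_le_cylinderMass_div ha N z ha₀ ha_top ω

/-- Finite-depth proportional bound: the induction invariant in the proof of
Proposition 1. -/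
theorem proportional_invariant (m : List Bool → ℝ≥0∞) (hm : DiscreteSemimeasure m)
    (M : List Bool → ℝ≥0∞) (hM : ∀ z : List Bool, M z = ∑' u : List Bool, m (z ++ u))
    (a : List Bool → ℝ≥0∞)
    (ha : ∀ (z : List Bool) (b : Bool),
      a (z ++ [b]) = a z * (M (z ++ [b]) / (M (z ++ [false]) + M (z ++ [true])))) :
    ∀ z : List Bool, a z ≠ 0 → a z ≠ ∞ →
      ∀ ω : ℕ → Bool,
        ∑' n : ℕ, m (z ++ prefixSeq ω n) / a (z ++ prefixSeq ω n) ≤ M z / a z :=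
  proportional_invariant_general m M hM a ha
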